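/- arXiv:0911.5513 — 3 statements merged into one kernel-verified Lean document; each statement's English description precedes it below -/
import Mathlib

section
/- For every integer n ≥ 0 and every complex number N with (2N+n)_n ≠ 0, and every complex X, the Gegenbauer polynomial satisfies C_n^N(X) = ((-2i)^n (N)_n / ((2N+n)_n · n!)) · Ĥ_n^{1/2-N-n}(-iX), where Ĥ is the scaled relativistic Hermite polynomial. -/
open Finset Polynomial

/-- The Gegenbauer polynomial `C_n^N(X)` (complex parameter and argument). -/
noncomputable def Geg (n : ℕ) (N X : ℂ) : ℂ :=
  ∑ k ∈ Finset.range (n / 2 + 1),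
    (-1) ^ k * ((ascPochhammer ℂ (n - k)).eval N /
      (((n - 2 * k).factorial : ℂ) * (k.factorial : ℂ))) * (2 * X) ^ (n - 2 * k)

/-- The scaled relativistic Hermite polynomial `Ĥ_n^N(X)`, a polynomial in both `N` and `X`;
for real `N > 0` it equals `N^(n/2) * H_n^N(X√N)`.  Here the quotient
`(2N)_n / (N + 1/2)_k` has been rewritten, using `(2N)_n = 2^n (N)_⌈n/2⌉ (N+1/2)_⌊n/2⌋`,
as the polynomial `2^n (N)_⌈n/2⌉ (N + 1/2 + k)_(⌊n/2⌋ - k)`. -/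
noncomputable def Hhat (n : ℕ) (N X : ℂ) : ℂ :=
  ∑ k ∈ Finset.range (n / 2 + 1),
    (-1) ^ k * (ascPochhammer ℂ ((n + 1) / 2)).eval N *
      (ascPochhammer ℂ (n / 2 - k)).eval (N + 1 / 2 + (k : ℂ)) *
      ((n.factorial : ℂ) / (((n - 2 * k).factorial : ℂ) * (k.factorial : ℂ))) *
      (2 * X) ^ (n - 2 * k)

/-! Compare the two sums term by term. With `M = 1/2 - N - n`, the Legendre duplication formula
`(2M)_n = 2^n (M)_⌈n/2⌉ (M + 1/2)_⌊n/2⌋` splits as `2^n (M)_⌈n/2⌉ (M + 1/2)_k (M + 1/2 + k)_(⌊n/2⌋-k)`,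
and the reflection `(1 - x - j)_j = (-1)^j (x)_j` turns `(2M)_n` into `(-1)^n (2N + n)_n` and
`(M + 1/2)_k` into `(-1)^k (N + n - k)_k`, the factor completing `(N)_(n-k)` to `(N)_n`. Hence
`(N)_(n-k) (2N + n)_n = (-1)^(n-k) 2^n (N)_n (M)_⌈n/2⌉ (M + 1/2 + k)_(⌊n/2⌋-k)`, and the powers of
`-i` supply exactly the sign `(-1)^(n-k)`. -/

theorem ascPochhammer_eval_add_nat {R : Type*} [CommSemiring R] (a b : ℕ) (x : R) :
    (ascPochhammer R (a + b)).eval x =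
      (ascPochhammer R a).eval x * (ascPochhammer R b).eval (x + a) := by
  rw [← ascPochhammer_mul, eval_mul, eval_comp, eval_add, eval_X, eval_natCast]

theorem ascPochhammer_eval_one_sub_sub {R : Type*} [Ring R] (j : ℕ) (x : R) :
    (ascPochhammer R j).eval (1 - x - j) = (-1) ^ j * (ascPochhammer R j).eval x := by
  rw [show 1 - x - j = -(x + j - 1) by abel, ascPochhammer_eval_neg_eq_descPochhammer,
    descPochhammer_eval_eq_ascPochhammer, show x + j - 1 - j + 1 = x by abel]

section Duplication

variable {K : Type*} [Field K] [NeZero (2 : K)]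

theorem ascPochhammer_eval_two_mul (n : ℕ) (y : K) :
    (ascPochhammer K n).eval (2 * y) =
      2 ^ n * (ascPochhammer K ((n + 1) / 2)).eval y *
        (ascPochhammer K (n / 2)).eval (y + 1 / 2) := by
  have two_mul_half : (2 : K) * (1 / 2) = 1 := mul_one_div_cancel two_ne_zero
  induction n with
  | zero => simp
  | succ n ih =>
    rw [ascPochhammer_succ_eval, ih]
    obtain ⟨m, rfl | rfl⟩ := Nat.even_or_odd' n
    · rw [show (2 * m + 1 + 1) / 2 = m + 1 by omega, show (2 * m + 1) / 2 = m by omega,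
        show 2 * m / 2 = m by omega, ascPochhammer_succ_eval]
      push_cast
      ring
    · rw [show (2 * m + 1 + 1 + 1) / 2 = m + 1 by omega, show (2 * m + 1 + 1) / 2 = m + 1 by omega,
        show (2 * m + 1) / 2 = m by omega, ascPochhammer_succ_eval (k := y + 1 / 2)]
      push_cast
      linear_combination -(2 ^ (2 * m + 1) * (ascPochhammer K (m + 1)).eval y *
        (ascPochhammer K m).eval (y + 1 / 2)) * two_mul_half

theorem ascPochhammer_eval_two_mul_of_le (n k : ℕ) (hk : k ≤ n / 2) (y : K) :
    (ascPochhammer K n).eval (2 * y) =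
      2 ^ n * (ascPochhammer K ((n + 1) / 2)).eval y * (ascPochhammer K k).eval (y + 1 / 2) *
        (ascPochhammer K (n / 2 - k)).eval (y + 1 / 2 + k) := by
  obtain ⟨j, hj⟩ := Nat.exists_eq_add_of_le hk
  rw [ascPochhammer_eval_two_mul, hj, Nat.add_sub_cancel_left, ascPochhammer_eval_add_nat]
  ring

theorem ascPochhammer_sub_eval_mul_eval_two_mul_add (n k : ℕ) (hk : k ≤ n / 2) (N : K) :
    (ascPochhammer K (n - k)).eval N * (ascPochhammer K n).eval (2 * N + n) =
      (-1) ^ (n - k) * 2 ^ n * (ascPochhammer K n).eval N *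
        (ascPochhammer K ((n + 1) / 2)).eval (1 / 2 - N - n) *
        (ascPochhammer K (n / 2 - k)).eval (1 / 2 - N - n + 1 / 2 + k) := by
  set M : K := 1 / 2 - N - n
  have hkn : k ≤ n := hk.trans (Nat.div_le_self n 2)
  have hhalf : (1 : K) / 2 + 1 / 2 = 1 := add_halves 1
  have hE : (ascPochhammer K n).eval (2 * N + n) = (-1) ^ n * (ascPochhammer K n).eval (2 * M) := by
    rw [← ascPochhammer_eval_one_sub_sub]
    congr 1
    linear_combination hhalf
  have hsplit : (ascPochhammer K n).eval N =
      (ascPochhammer K (n - k)).eval N * (ascPochhammer K k).eval (N + (n - k : ℕ)) := by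
    rw [← ascPochhammer_eval_add_nat, Nat.sub_add_cancel hkn]
  have hk' : (ascPochhammer K k).eval (N + (n - k : ℕ)) =
      (-1) ^ k * (ascPochhammer K k).eval (M + 1 / 2) := by
    rw [← ascPochhammer_eval_one_sub_sub]
    congr 1
    push_cast [Nat.cast_sub hkn]
    linear_combination hhalf
  have hsign : (-1 : K) ^ n = (-1) ^ (n - k) * (-1) ^ k := by
    rw [← pow_add, Nat.sub_add_cancel hkn]
  rw [hE, hsplit, hk', ascPochhammer_eval_two_mul_of_le n k hk M, hsign]
  ring

end Duplication

theorem neg_two_mul_I_pow_mul_pow (n k : ℕ) (hk : 2 * k ≤ n) (X : ℂ) :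
    (-2 * Complex.I) ^ n * (2 * (-Complex.I * X)) ^ (n - 2 * k) =
      (-1) ^ (n - k) * 2 ^ n * (2 * X) ^ (n - 2 * k) := by
  have hpow : (-Complex.I) ^ n * (-Complex.I) ^ (n - 2 * k) = (-1) ^ (n - k) := by
    rw [← pow_add, show n + (n - 2 * k) = 2 * (n - k) by omega, pow_mul, neg_sq, Complex.I_sq]
  calc _ = 2 ^ n * ((-Complex.I) ^ n * (-Complex.I) ^ (n - 2 * k)) * (2 * X) ^ (n - 2 * k) := by
        rw [show -2 * Complex.I = 2 * -Complex.I by ring,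
          show 2 * (-Complex.I * X) = -Complex.I * (2 * X) by ring, mul_pow, mul_pow]
        ring
    _ = _ := by rw [hpow]; ring

/-- `C_n^N(X) = ((-2i)^n (N)_n / ((2N+n)_n · n!)) · Ĥ_n^{1/2-N-n}(-iX)`. -/
theorem gegenbauer_eq_Hhat (n : ℕ) (N : ℂ)
    (h : (ascPochhammer ℂ n).eval (2 * N + (n : ℂ)) ≠ 0) (X : ℂ) :
    Geg n N X =
      (-2 * Complex.I) ^ n * (ascPochhammer ℂ n).eval N /
          ((ascPochhammer ℂ n).eval (2 * N + (n : ℂ)) * (n.factorial : ℂ)) *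
        Hhat n (1 / 2 - N - (n : ℂ)) (-Complex.I * X) := by
  unfold Geg Hhat
  rw [Finset.mul_sum]
  refine Finset.sum_congr rfl fun k hk => ?_
  have hk : k ≤ n / 2 := Nat.lt_succ_iff.mp (Finset.mem_range.mp hk)
  have hI := neg_two_mul_I_pow_mul_pow n k (by omega) X
  have hkey := ascPochhammer_sub_eval_mul_eval_two_mul_add n k hk N
  -- otherwise `field_simp` also clears the denominators inside these `eval` arguments
  generalize (ascPochhammer ℂ ((n + 1) / 2)).eval (1 / 2 - N - n) = A at hkey ⊢
  generalize (ascPochhammer ℂ (n / 2 - k)).eval (1 / 2 - N - n + 1 / 2 + k) = B at hkey ⊢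
  have hnfac : (n.factorial : ℂ) ≠ 0 := Nat.cast_ne_zero.mpr n.factorial_ne_zero
  calc _ = (-1) ^ k * ((ascPochhammer ℂ (n - k)).eval N * (ascPochhammer ℂ n).eval (2 * N + n) /
          (((n - 2 * k).factorial * k.factorial) * (ascPochhammer ℂ n).eval (2 * N + n))) *
          (2 * X) ^ (n - 2 * k) := by rw [mul_div_mul_right _ _ h]
    _ = _ := by
      rw [hkey]
      field_simp
      linear_combination (-((ascPochhammer ℂ n).eval N * A * B /
        ((n - 2 * k).factorial * k.factorial))) * hI
end

section
/- (Scaling identity for Gegenbauer polynomials) For every integer n ≥ 0 and all complex numbers N, c, X: C_n^N(cX) = Σ_{l=0}^{⌊n/2⌋} ((-1)^l (N)_l / l!) · (1-c²)^l · c^{n-2l} · C_{n-2l}^{N+l}(X). -/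
open Finset Polynomial

lemma poch_add (a b : ℕ) (N : ℂ) :
    (ascPochhammer ℂ a).eval N * (ascPochhammer ℂ b).eval (N + a) =
      (ascPochhammer ℂ (a + b)).eval N := by
  have h := congrArg (Polynomial.eval N) (ascPochhammer_mul ℂ a b)
  simpa [Polynomial.eval_comp] using h

lemma alt_sum (m : ℕ) :
    ∑ i ∈ range (m + 1), (-1 : ℂ) ^ i * (m.choose i : ℂ) = if m = 0 then 1 else 0 := by
  have h := @Int.alternating_sum_range_choose m
  have := congrArg (fun z : ℤ => (z : ℂ)) h
  push_cast at this
  simpa using this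

lemma triangle (M : ℕ) (f : ℕ → ℕ → ℂ) :
    ∑ l ∈ range (M + 1), ∑ m ∈ range (M - l + 1), f l m =
      ∑ k ∈ range (M + 1), ∑ l ∈ range (k + 1), f l (k - l) := by
  rw [← Finset.sum_sigma (range (M+1)) (fun l => range (M - l + 1)) (fun p => f p.1 p.2),
    ← Finset.sum_sigma (range (M+1)) (fun k => range (k + 1)) (fun p => f p.2 (p.1 - p.2))]
  refine Finset.sum_nbij' (fun p => ⟨p.1 + p.2, p.1⟩) (fun p => ⟨p.2, p.1 - p.2⟩) ?_ ?_ ?_ ?_ ?_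
  all_goals rintro ⟨a, b⟩ h
  all_goals simp only [Finset.mem_sigma, Finset.mem_range] at h ⊢
  · omega
  · omega
  · simp
  · have : b + (a - b) = a := by omega
    simp [this]
  · simp

lemma triangle2 (M : ℕ) (g : ℕ → ℕ → ℂ) :
    ∑ l ∈ range (M + 1), ∑ s ∈ range (l + 1), g l s =
      ∑ s ∈ range (M + 1), ∑ i ∈ range (M - s + 1), g (s + i) s := by
  calc ∑ l ∈ range (M + 1), ∑ s ∈ range (l + 1), g l s
      = ∑ k ∈ range (M + 1), ∑ l ∈ range (k + 1), g (l + (k - l)) l := by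
        refine Finset.sum_congr rfl fun k hk => Finset.sum_congr rfl fun l hl => ?_
        simp only [Finset.mem_range] at hl
        congr 1
        omega
    _ = ∑ s ∈ range (M + 1), ∑ i ∈ range (M - s + 1), g (s + i) s :=
        (triangle M (fun s i => g (s + i) s)).symm

lemma binom_expand (c : ℂ) (l : ℕ) :
    (1 - c ^ 2) ^ l =
      ∑ s ∈ range (l + 1), (-1 : ℂ) ^ (l - s) * c ^ (2 * (l - s)) * ((l.choose (l - s) : ℕ) : ℂ) := by
  have h : (1 - c ^ 2) = (-(c ^ 2)) + 1 := by ring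
  rw [h, add_pow]
  rw [← Finset.sum_range_reflect]
  refine Finset.sum_congr rfl fun s hs => ?_
  simp only [Finset.mem_range] at hs
  have h1 : l + 1 - 1 - s = l - s := by omega
  rw [h1, neg_pow, one_pow, mul_one, pow_mul']
  ring

lemma gegInnerSum (n k s : ℕ) (hk : 2 * k ≤ n) (hs : s ≤ k) (N c : ℂ) :
    ∑ i ∈ range (k - s + 1),
      (-1 : ℂ) ^ (s + i) * (ascPochhammer ℂ (s + i)).eval N / ((s + i).factorial : ℂ) *
        ((-1 : ℂ) ^ ((s + i) - s) * c ^ (2 * ((s + i) - s)) * (((s + i).choose ((s + i) - s) : ℕ) : ℂ)) *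
        c ^ (n - 2 * (s + i)) *
        ((-1 : ℂ) ^ (k - (s + i)) * (ascPochhammer ℂ (n - (s + i) - k)).eval (N + ((s + i : ℕ) : ℂ)) /
          (((n - 2 * k).factorial : ℂ) * ((k - (s + i)).factorial : ℂ))) =
      if s = k then
        (-1 : ℂ) ^ k * ((ascPochhammer ℂ (n - k)).eval N /
          (((n - 2 * k).factorial : ℂ) * (k.factorial : ℂ))) * c ^ (n - 2 * k)
      else 0 := by
  set K : ℂ := (-1 : ℂ) ^ k * (ascPochhammer ℂ (n - k)).eval N * c ^ (n - 2 * s) /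
    (((n - 2 * k).factorial : ℂ) * (s.factorial : ℂ) * ((k - s).factorial : ℂ)) with hK
  have step1 : ∀ i ∈ range (k - s + 1),
      (-1 : ℂ) ^ (s + i) * (ascPochhammer ℂ (s + i)).eval N / ((s + i).factorial : ℂ) *
        ((-1 : ℂ) ^ ((s + i) - s) * c ^ (2 * ((s + i) - s)) * (((s + i).choose ((s + i) - s) : ℕ) : ℂ)) *
        c ^ (n - 2 * (s + i)) *
        ((-1 : ℂ) ^ (k - (s + i)) * (ascPochhammer ℂ (n - (s + i) - k)).eval (N + ((s + i : ℕ) : ℂ)) /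
          (((n - 2 * k).factorial : ℂ) * ((k - (s + i)).factorial : ℂ))) =
      K * ((-1 : ℂ) ^ i * (((k - s).choose i : ℕ) : ℂ)) := by
    intro i hi
    simp only [Finset.mem_range] at hi
    have hik : s + i ≤ k := by omega
    have hi1 : (s + i) - s = i := by omega
    have hi2 : k - (s + i) = k - s - i := by omega
    rw [hi1, hi2]
    -- combine powers of c
    have hc : c ^ (2 * i) * c ^ (n - 2 * (s + i)) = c ^ (n - 2 * s) := by
      rw [← pow_add]; congr 1; omega
    -- sign identity
    have e1 : (-1 : ℂ) ^ (s + i) * (-1 : ℂ) ^ i * (-1 : ℂ) ^ (k - s - i) = (-1 : ℂ) ^ k * (-1 : ℂ) ^ i := by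
      rw [← pow_add, ← pow_add, ← pow_add]
      congr 1
      omega
    -- pochhammer identity
    have e2 : (ascPochhammer ℂ (s + i)).eval N *
        (ascPochhammer ℂ (n - (s + i) - k)).eval (N + ((s + i : ℕ) : ℂ)) =
        (ascPochhammer ℂ (n - k)).eval N := by
      have h := poch_add (s + i) (n - (s + i) - k) N
      rwa [show (s + i) + (n - (s + i) - k) = n - k by omega] at h
    -- factorial identities
    have e3 : (((s + i).factorial : ℕ) : ℂ) = (((s + i).choose i : ℕ) : ℂ) * (i.factorial : ℂ) * (s.factorial : ℂ) := by
      have := Nat.choose_mul_factorial_mul_factorial (show i ≤ s + i by omega)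
      rw [show s + i - i = s by omega] at this
      exact_mod_cast this.symm
    have e4 : (((k - s).factorial : ℕ) : ℂ) = (((k - s).choose i : ℕ) : ℂ) * (i.factorial : ℂ) * ((k - s - i).factorial : ℂ) := by
      have := Nat.choose_mul_factorial_mul_factorial (show i ≤ k - s by omega)
      exact_mod_cast this.symm
    have hf1 : ((n - 2 * k).factorial : ℂ) ≠ 0 := Nat.cast_ne_zero.mpr (Nat.factorial_ne_zero _)
    have hf2 : ((s + i).factorial : ℂ) ≠ 0 := Nat.cast_ne_zero.mpr (Nat.factorial_ne_zero _)
    have hf3 : (s.factorial : ℂ) ≠ 0 := Nat.cast_ne_zero.mpr (Nat.factorial_ne_zero _)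
    have hf4 : ((k - s).factorial : ℂ) ≠ 0 := Nat.cast_ne_zero.mpr (Nat.factorial_ne_zero _)
    have hf5 : ((k - s - i).factorial : ℂ) ≠ 0 := Nat.cast_ne_zero.mpr (Nat.factorial_ne_zero _)
    have hC1 : (((s + i).choose i : ℕ) : ℂ) ≠ 0 :=
      Nat.cast_ne_zero.mpr (Nat.choose_pos (by omega)).ne'
    have hC2 : (((k - s).choose i : ℕ) : ℂ) ≠ 0 :=
      Nat.cast_ne_zero.mpr (Nat.choose_pos (by omega)).ne'
    calc (-1 : ℂ) ^ (s + i) * (ascPochhammer ℂ (s + i)).eval N / ((s + i).factorial : ℂ) *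
          ((-1 : ℂ) ^ i * c ^ (2 * i) * (((s + i).choose i : ℕ) : ℂ)) *
          c ^ (n - 2 * (s + i)) *
          ((-1 : ℂ) ^ (k - s - i) * (ascPochhammer ℂ (n - (s + i) - k)).eval (N + ((s + i : ℕ) : ℂ)) /
            (((n - 2 * k).factorial : ℂ) * ((k - s - i).factorial : ℂ)))
        = ((-1 : ℂ) ^ (s + i) * (-1 : ℂ) ^ i * (-1 : ℂ) ^ (k - s - i)) *
          ((c ^ (2 * i) * c ^ (n - 2 * (s + i))) *
            ((ascPochhammer ℂ (s + i)).eval N *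
              (ascPochhammer ℂ (n - (s + i) - k)).eval (N + ((s + i : ℕ) : ℂ)) *
              (((s + i).choose i : ℕ) : ℂ) /
              (((s + i).factorial : ℂ) * (((n - 2 * k).factorial : ℂ) * ((k - s - i).factorial : ℂ))))) := by
          ring
      _ = ((-1 : ℂ) ^ k * (-1 : ℂ) ^ i) *
          (c ^ (n - 2 * s) *
            ((ascPochhammer ℂ (n - k)).eval N * (((s + i).choose i : ℕ) : ℂ) /
              (((s + i).factorial : ℂ) * (((n - 2 * k).factorial : ℂ) * ((k - s - i).factorial : ℂ))))) := by
          rw [e1, hc, e2]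
      _ = K * ((-1 : ℂ) ^ i * (((k - s).choose i : ℕ) : ℂ)) := by
          have hfI : ((i.factorial : ℕ) : ℂ) ≠ 0 := Nat.cast_ne_zero.mpr (Nat.factorial_ne_zero _)
          rw [hK, e3, e4]
          field_simp
  rw [Finset.sum_congr rfl step1, ← Finset.mul_sum, alt_sum]
  by_cases h : s = k
  · subst h
    simp only [Nat.sub_self, hK, if_true, eq_self_iff_true]
    norm_num [Nat.factorial]
    ring
  · rw [if_neg (by omega), if_neg h, mul_zero]

lemma key (n k : ℕ) (hk : 2 * k ≤ n) (N c : ℂ) :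
    ∑ l ∈ range (k + 1),
      (-1 : ℂ) ^ l * (ascPochhammer ℂ l).eval N / (l.factorial : ℂ) * (1 - c ^ 2) ^ l *
        c ^ (n - 2 * l) *
        ((-1 : ℂ) ^ (k - l) * (ascPochhammer ℂ (n - l - k)).eval (N + (l : ℂ)) /
          (((n - 2 * k).factorial : ℂ) * ((k - l).factorial : ℂ))) =
      (-1 : ℂ) ^ k * ((ascPochhammer ℂ (n - k)).eval N /
        (((n - 2 * k).factorial : ℂ) * (k.factorial : ℂ))) * c ^ (n - 2 * k) := by
  have step1 : ∀ l ∈ range (k + 1),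
      (-1 : ℂ) ^ l * (ascPochhammer ℂ l).eval N / (l.factorial : ℂ) * (1 - c ^ 2) ^ l *
        c ^ (n - 2 * l) *
        ((-1 : ℂ) ^ (k - l) * (ascPochhammer ℂ (n - l - k)).eval (N + (l : ℂ)) /
          (((n - 2 * k).factorial : ℂ) * ((k - l).factorial : ℂ))) =
      ∑ s ∈ range (l + 1),
        (-1 : ℂ) ^ l * (ascPochhammer ℂ l).eval N / (l.factorial : ℂ) *
          ((-1 : ℂ) ^ (l - s) * c ^ (2 * (l - s)) * ((l.choose (l - s) : ℕ) : ℂ)) *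
          c ^ (n - 2 * l) *
          ((-1 : ℂ) ^ (k - l) * (ascPochhammer ℂ (n - l - k)).eval (N + (l : ℂ)) /
            (((n - 2 * k).factorial : ℂ) * ((k - l).factorial : ℂ))) := by
    intro l hl
    rw [binom_expand c l, Finset.mul_sum, Finset.sum_mul, Finset.sum_mul]
  rw [Finset.sum_congr rfl step1]
  rw [triangle2 k (fun l s =>
      (-1 : ℂ) ^ l * (ascPochhammer ℂ l).eval N / (l.factorial : ℂ) *
        ((-1 : ℂ) ^ (l - s) * c ^ (2 * (l - s)) * ((l.choose (l - s) : ℕ) : ℂ)) *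
        c ^ (n - 2 * l) *
        ((-1 : ℂ) ^ (k - l) * (ascPochhammer ℂ (n - l - k)).eval (N + (l : ℂ)) /
          (((n - 2 * k).factorial : ℂ) * ((k - l).factorial : ℂ))))]
  have step2 : ∀ s ∈ range (k + 1),
      (∑ i ∈ range (k - s + 1),
        (-1 : ℂ) ^ (s + i) * (ascPochhammer ℂ (s + i)).eval N / ((s + i).factorial : ℂ) *
          ((-1 : ℂ) ^ ((s + i) - s) * c ^ (2 * ((s + i) - s)) * (((s + i).choose ((s + i) - s) : ℕ) : ℂ)) *
          c ^ (n - 2 * (s + i)) *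
          ((-1 : ℂ) ^ (k - (s + i)) * (ascPochhammer ℂ (n - (s + i) - k)).eval (N + ((s + i : ℕ) : ℂ)) /
            (((n - 2 * k).factorial : ℂ) * ((k - (s + i)).factorial : ℂ)))) =
      if s = k then
        (-1 : ℂ) ^ k * ((ascPochhammer ℂ (n - k)).eval N /
          (((n - 2 * k).factorial : ℂ) * (k.factorial : ℂ))) * c ^ (n - 2 * k)
      else 0 := by
    intro s hs
    simp only [Finset.mem_range] at hs
    exact gegInnerSum n k s hk (by omega) N c
  rw [Finset.sum_congr rfl step2]
  simp

/-- Scaling identity for Gegenbauer polynomials: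
`C_n^N(cX) = Σ_{l=0}^{⌊n/2⌋} ((-1)^l (N)_l / l!) (1-c²)^l c^(n-2l) C_(n-2l)^(N+l)(X)`. -/
theorem gegenbauer_scaling (n : ℕ) (N c X : ℂ) :
    Geg n N (c * X) =
      ∑ l ∈ Finset.range (n / 2 + 1),
        (-1) ^ l * (ascPochhammer ℂ l).eval N / (l.factorial : ℂ) *
          (1 - c ^ 2) ^ l * c ^ (n - 2 * l) * Geg (n - 2 * l) (N + (l : ℂ)) X := by
  symm
  calc ∑ l ∈ Finset.range (n / 2 + 1),
        (-1) ^ l * (ascPochhammer ℂ l).eval N / (l.factorial : ℂ) *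
          (1 - c ^ 2) ^ l * c ^ (n - 2 * l) * Geg (n - 2 * l) (N + (l : ℂ)) X
      = ∑ l ∈ range (n / 2 + 1), ∑ m ∈ range (n / 2 - l + 1),
          (-1 : ℂ) ^ l * (ascPochhammer ℂ l).eval N / (l.factorial : ℂ) *
            (1 - c ^ 2) ^ l * c ^ (n - 2 * l) *
            ((-1) ^ m * ((ascPochhammer ℂ (n - 2 * l - m)).eval (N + (l : ℂ)) /
              (((n - 2 * l - 2 * m).factorial : ℂ) * (m.factorial : ℂ))) * (2 * X) ^ (n - 2 * l - 2 * m)) := by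
        refine Finset.sum_congr rfl fun l hl => ?_
        simp only [Finset.mem_range] at hl
        have h2 : (n - 2 * l) / 2 = n / 2 - l := by omega
        rw [Geg, h2, Finset.mul_sum]
    _ = ∑ k ∈ range (n / 2 + 1), ∑ l ∈ range (k + 1),
          (-1 : ℂ) ^ l * (ascPochhammer ℂ l).eval N / (l.factorial : ℂ) *
            (1 - c ^ 2) ^ l * c ^ (n - 2 * l) *
            ((-1) ^ (k - l) * ((ascPochhammer ℂ (n - 2 * l - (k - l))).eval (N + (l : ℂ)) /
              (((n - 2 * l - 2 * (k - l)).factorial : ℂ) * ((k - l).factorial : ℂ))) *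
              (2 * X) ^ (n - 2 * l - 2 * (k - l))) :=
        triangle (n / 2) _
    _ = ∑ k ∈ range (n / 2 + 1),
          (∑ l ∈ range (k + 1),
            (-1 : ℂ) ^ l * (ascPochhammer ℂ l).eval N / (l.factorial : ℂ) *
              (1 - c ^ 2) ^ l * c ^ (n - 2 * l) *
              ((-1 : ℂ) ^ (k - l) * (ascPochhammer ℂ (n - l - k)).eval (N + (l : ℂ)) /
                (((n - 2 * k).factorial : ℂ) * ((k - l).factorial : ℂ)))) * (2 * X) ^ (n - 2 * k) := by
        refine Finset.sum_congr rfl fun k hk => ?_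
        rw [Finset.sum_mul]
        refine Finset.sum_congr rfl fun l hl => ?_
        simp only [Finset.mem_range] at hk hl
        have ha : n - 2 * l - (k - l) = n - l - k := by omega
        have hb : n - 2 * l - 2 * (k - l) = n - 2 * k := by omega
        rw [ha, hb]
        ring
    _ = ∑ k ∈ range (n / 2 + 1),
          ((-1 : ℂ) ^ k * ((ascPochhammer ℂ (n - k)).eval N /
            (((n - 2 * k).factorial : ℂ) * (k.factorial : ℂ))) * c ^ (n - 2 * k)) * (2 * X) ^ (n - 2 * k) := by
        refine Finset.sum_congr rfl fun k hk => ?_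
        simp only [Finset.mem_range] at hk
        rw [key n k (by omega) N c]
    _ = Geg n N (c * X) := by
        rw [Geg]
        refine Finset.sum_congr rfl fun k hk => ?_
        rw [show (2 * (c * X)) = c * (2 * X) by ring, mul_pow]
        ring
end

section
/- Let μ be a Borel probability measure on ℝ all of whose absolute moments ∫|z|^m dμ(z) are finite, and for each integer m ≥ 0 define P_m(X) = ∫_ℝ (X + iz)^m dμ(z). Then for every integer n ≥ 0 and every real X, the Turán (Hankel) determinant det[(P_{j+k}(X))_{0≤j,k≤n}] equals ((-1)^{n(n+1)/2}/(n+1)!) · ∫_{ℝ^{n+1}} Π_{0≤j<k≤n} (z_j - z_k)² dμ(z_0)⋯dμ(z_n); in particular it does not depend on X. -/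
/-!
Heine's identity. Writing every entry of the Hankel matrix as an integral and expanding the
determinant multilinearly in its columns gives `det[P_(j+k)(X)] = ∫ det[w_k^(j+k)] dμ^(n+1)`
with `w_k = X + i z_k`, and `det[w_k^(j+k)] = (∏ w_k^k) V(w)` for the Vandermonde determinant
`V`. Permuting the variables preserves the product measure; averaging over all permutations
turns the integrand into `V(w)² / (n+1)!`, because `∑_σ sgn σ ∏ w_(σ k)^k = V(w)`. Finally
`V(X + i z) = i^(n(n+1)/2) V(z)` does not depend on `X`, and `V(z)² = ∏_(j<k) (z_j - z_k)²`.
-/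

open Finset MeasureTheory

theorem Fin.sum_card_Ioi (n : ℕ) : ∑ i : Fin n, #(Ioi i) = n.choose 2 := by
  simp only [Fin.card_Ioi]
  rw [Fin.sum_univ_eq_sum_range (fun i => n - 1 - i), sum_range_reflect (fun i => i) n,
    sum_range_id, Nat.choose_two_right]

namespace Matrix

variable {R : Type*} [CommRing R] {n : ℕ}

theorem det_vandermonde_const_mul (c : R) (v : Fin n → R) :
    (vandermonde fun i => c * v i).det = c ^ n.choose 2 * (vandermonde v).det := by
  simp only [det_vandermonde, ← mul_sub, prod_mul_distrib, prod_const, prod_pow_eq_pow_sum,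
    Fin.sum_card_Ioi]

theorem det_vandermonde_sq (v : Fin n → R) :
    (vandermonde v).det ^ 2 =
      ∏ p ∈ univ.filter (fun p : Fin n × Fin n => p.1 < p.2), (v p.1 - v p.2) ^ 2 := by
  rw [det_vandermonde, ← prod_pow, prod_finset_product _ univ (fun i => Ioi i) (by simp)]
  refine prod_congr rfl fun i _ => ?_
  rw [← prod_pow]
  exact prod_congr rfl fun j _ => by ring

theorem det_of_pow_add (w : Fin n → R) :
    (of fun j k : Fin n => w k ^ ((j : ℕ) + k)).det =
      (∏ k, w k ^ (k : ℕ)) * (vandermonde w).det := by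
  have : (of fun j k : Fin n => w k ^ ((j : ℕ) + k)) =
      (vandermonde w)ᵀ * diagonal fun k => w k ^ (k : ℕ) := by
    ext j k
    simp [mul_diagonal, vandermonde, pow_add]
  rw [this, det_mul, det_transpose, det_diagonal, mul_comm]

theorem sum_perm_det_of_pow_add (w : Fin n → R) :
    ∑ σ : Equiv.Perm (Fin n), (of fun j k : Fin n => w (σ k) ^ ((j : ℕ) + k)).det =
      (vandermonde w).det ^ 2 := by
  calc ∑ σ : Equiv.Perm (Fin n), (of fun j k : Fin n => w (σ k) ^ ((j : ℕ) + k)).det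
      = (∑ σ : Equiv.Perm (Fin n), (Equiv.Perm.sign σ : R) * ∏ k, w (σ k) ^ (k : ℕ)) *
          (vandermonde w).det := by
        rw [sum_mul]
        refine sum_congr rfl fun σ _ => ?_
        refine (det_of_pow_add (w ∘ σ)).trans ?_
        rw [show vandermonde (w ∘ σ) = (vandermonde w).submatrix σ id from rfl, det_permute]
        simp only [Function.comp_apply]
        ring
    _ = (vandermonde w).det ^ 2 := by
        simp only [sq, det_apply, Units.smul_def, zsmul_eq_mul, vandermonde_apply]

end Matrix

theorem MeasurableEquiv.coe_piCongrLeft_perm_inv {ι α : Type*} [MeasurableSpace α]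
    (σ : Equiv.Perm ι) :
    ⇑(MeasurableEquiv.piCongrLeft (fun _ => α) σ⁻¹) = fun z => z ∘ σ := by
  funext z i
  simp [MeasurableEquiv.coe_piCongrLeft, Equiv.Perm.inv_def, Equiv.piCongrLeft_apply]

namespace MeasureTheory

variable {ι α E 𝕜 : Type*} [Fintype ι] [MeasurableSpace α] {μ : Measure α} [SigmaFinite μ]
  [NormedAddCommGroup E] [RCLike 𝕜]

theorem Integrable.comp_perm {G : (ι → α) → E} (hG : Integrable G (Measure.pi fun _ => μ))
    (σ : Equiv.Perm ι) : Integrable (fun z => G (z ∘ σ)) (Measure.pi fun _ => μ) := by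
  have hσ := measurePreserving_piCongrLeft (fun _ => μ) σ⁻¹
  rw [← hσ.integrable_comp_emb (MeasurableEquiv.measurableEmbedding _),
    MeasurableEquiv.coe_piCongrLeft_perm_inv] at hG
  exact hG

variable [NormedSpace ℝ E]

theorem integral_comp_perm (σ : Equiv.Perm ι) (G : (ι → α) → E) :
    ∫ z, G (z ∘ σ) ∂(Measure.pi fun _ => μ) = ∫ z, G z ∂(Measure.pi fun _ => μ) := by
  rw [← (measurePreserving_piCongrLeft (fun _ => μ) σ⁻¹).integral_comp' G,
    MeasurableEquiv.coe_piCongrLeft_perm_inv]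

theorem integral_sum_comp_perm [DecidableEq ι] {G : (ι → α) → E}
    (hG : Integrable G (Measure.pi fun _ => μ)) :
    ∫ z, ∑ σ : Equiv.Perm ι, G (z ∘ σ) ∂(Measure.pi fun _ => μ) =
      (Fintype.card ι).factorial • ∫ z, G z ∂(Measure.pi fun _ => μ) := by
  rw [integral_finsetSum _ fun σ _ => hG.comp_perm σ]
  simp only [integral_comp_perm, sum_const, card_univ, Fintype.card_perm]

variable [DecidableEq ι]

theorem integrable_det_of {f : ι → ι → α → 𝕜} (hf : ∀ j k, Integrable (f j k) μ) :
    Integrable (fun z : ι → α => (Matrix.of fun j k => f j k (z k)).det)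
      (Measure.pi fun _ => μ) := by
  simp only [Matrix.det_apply, Matrix.of_apply, Units.smul_def, zsmul_eq_mul]
  exact integrable_finsetSum _ fun σ _ => (Integrable.fintype_prod fun k => hf _ _).const_mul _

theorem det_of_integral_eq_integral_det {f : ι → ι → α → 𝕜} (hf : ∀ j k, Integrable (f j k) μ) :
    (Matrix.of fun j k => ∫ x, f j k x ∂μ).det =
      ∫ z, (Matrix.of fun j k => f j k (z k)).det ∂(Measure.pi fun _ => μ) := by
  simp only [Matrix.det_apply, Matrix.of_apply, Units.smul_def, zsmul_eq_mul]
  rw [integral_finsetSum _ fun σ _ => (Integrable.fintype_prod fun k => hf _ _).const_mul _]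
  simp only [integral_const_mul, integral_fintype_prod_eq_prod]

theorem det_of_integral_pow_add {φ : α → 𝕜} (hφ : ∀ m : ℕ, Integrable (fun x => φ x ^ m) μ)
    (n : ℕ) :
    (Matrix.of fun j k : Fin n => ∫ x, φ x ^ ((j : ℕ) + k) ∂μ).det =
      (n.factorial : 𝕜)⁻¹ *
        ∫ z : Fin n → α, (Matrix.vandermonde (φ ∘ z)).det ^ 2 ∂(Measure.pi fun _ => μ) := by
  rw [det_of_integral_eq_integral_det fun j k => hφ _,
    eq_inv_mul_iff_mul_eq₀ (Nat.cast_ne_zero.2 n.factorial_ne_zero)]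
  calc (n.factorial : 𝕜) * ∫ z, (Matrix.of fun j k : Fin n => φ (z k) ^ ((j : ℕ) + k)).det
        ∂(Measure.pi fun _ => μ)
      = ∫ z, ∑ σ : Equiv.Perm (Fin n),
          (Matrix.of fun j k : Fin n => φ ((z ∘ σ) k) ^ ((j : ℕ) + k)).det
            ∂(Measure.pi fun _ => μ) := by
        rw [integral_sum_comp_perm (integrable_det_of fun j k => hφ _), Fintype.card_fin,
          nsmul_eq_mul]
    _ = _ := integral_congr_ae (.of_forall fun z => Matrix.sum_perm_det_of_pow_add (φ ∘ z))

end MeasureTheory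

theorem integrable_ofReal_pow {μ : Measure ℝ}
    (hmom : ∀ m : ℕ, Integrable (fun z : ℝ => |z| ^ m) μ) (m : ℕ) :
    Integrable (fun z : ℝ => (z : ℂ) ^ m) μ := by
  refine (integrable_norm_iff (by fun_prop)).1 ?_
  simpa [norm_pow] using hmom m

theorem integrable_ofReal_add_I_mul_pow {μ : Measure ℝ}
    (hmom : ∀ m : ℕ, Integrable (fun z : ℝ => |z| ^ m) μ) (X : ℝ) (m : ℕ) :
    Integrable (fun z : ℝ => ((X : ℂ) + Complex.I * z) ^ m) μ := by
  simp_rw [add_pow, mul_pow]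
  refine integrable_finsetSum _ fun k _ => ?_
  refine ((integrable_ofReal_pow hmom (m - k)).const_mul
    ((X : ℂ) ^ k * Complex.I ^ (m - k) * m.choose k)).congr (.of_forall fun z => ?_)
  ring

theorem turan_hankel_determinant_general (μ : Measure ℝ)
    (hmom : ∀ m : ℕ, Integrable (fun z : ℝ => |z| ^ m) μ)
    (P : ℕ → ℝ → ℂ) (hP : ∀ (m : ℕ) (X : ℝ), P m X = ∫ z, ((X : ℂ) + Complex.I * z) ^ m ∂μ)
    (n : ℕ) (X : ℝ) :
    Matrix.det (Matrix.of fun j k : Fin (n + 1) => P ((j : ℕ) + (k : ℕ)) X) =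
      ((-1) ^ (n * (n + 1) / 2) / ((n + 1).factorial : ℂ)) *
        ∫ z : Fin (n + 1) → ℝ,
          (∏ p ∈ Finset.univ.filter (fun p : Fin (n + 1) × Fin (n + 1) => p.1 < p.2),
            (((z p.1 - z p.2 : ℝ) : ℂ)) ^ 2) ∂(Measure.pi fun _ => μ) := by
  have : IsFiniteMeasure μ :=
    (integrable_const_iff_isFiniteMeasure one_ne_zero).1 (by simpa using hmom 0)
  have hV (z : Fin (n + 1) → ℝ) :
      (Matrix.vandermonde fun k => (X : ℂ) + Complex.I * z k).det ^ 2 =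
        (-1) ^ (n * (n + 1) / 2) *
          ∏ p ∈ univ.filter (fun p : Fin (n + 1) × Fin (n + 1) => p.1 < p.2),
            (((z p.1 - z p.2 : ℝ) : ℂ)) ^ 2 := by
    simp_rw [add_comm (X : ℂ), Matrix.det_vandermonde_add, Matrix.det_vandermonde_const_mul,
      mul_pow, ← pow_mul, pow_mul', Complex.I_sq, Matrix.det_vandermonde_sq,
      Nat.choose_two_right, Nat.add_sub_cancel, mul_comm n, Complex.ofReal_sub]
  simp_rw [hP]
  rw [det_of_integral_pow_add (integrable_ofReal_add_I_mul_pow hmom X)]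
  simp_rw [Function.comp_def, hV, integral_const_mul]
  ring

/-- If `P_m(X) = ∫ (X + iz)^m dμ(z)` for a probability measure `μ` with all absolute
moments finite, then the Turán (Hankel) determinant `det[(P_(j+k)(X))_(0≤j,k≤n)]` equals
`((-1)^(n(n+1)/2)/(n+1)!) ∫ Π_(j<k) (z_j - z_k)² dμ(z_0)⋯dμ(z_n)`;
in particular it does not depend on `X`. -/
theorem turan_hankel_determinant (μ : Measure ℝ) [IsProbabilityMeasure μ]
    (hmom : ∀ m : ℕ, Integrable (fun z : ℝ => |z| ^ m) μ)
    (P : ℕ → ℝ → ℂ) (hP : ∀ (m : ℕ) (X : ℝ), P m X = ∫ z, ((X : ℂ) + Complex.I * z) ^ m ∂μ)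
    (n : ℕ) (X : ℝ) :
    Matrix.det (Matrix.of fun j k : Fin (n + 1) => P ((j : ℕ) + (k : ℕ)) X) =
      ((-1) ^ (n * (n + 1) / 2) / ((n + 1).factorial : ℂ)) *
        ∫ z : Fin (n + 1) → ℝ,
          (∏ p ∈ Finset.univ.filter (fun p : Fin (n + 1) × Fin (n + 1) => p.1 < p.2),
            (((z p.1 - z p.2 : ℝ) : ℂ)) ^ 2) ∂(Measure.pi fun _ => μ) :=
  turan_hankel_determinant_general μ hmom P hP n X
end
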